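/- arXiv:1507.01741 — 5 statements merged into one kernel-verified Lean document; each statement's English description precedes it below -/
import Mathlib

section
/- For every t ∈ [0,T] one has the bounds ∫_{ℝⁿ} (∂ₜ y(x,t))² dx ≤ c_max² · ∫_{ℝⁿ} |∇f(x)|² dx and ∫_{ℝⁿ} |∇ₓ y(x,t)|² dx ≤ ∫_{ℝⁿ} |∇f(x)|² dx. -/
open MeasureTheory

/-- Sum of the second partial derivatives (spatial Laplacian) of `u` at `x`. -/
noncomputable def spatialLaplacian {n : ℕ} (u : EuclideanSpace ℝ (Fin n) → ℝ)
    (x : EuclideanSpace ℝ (Fin n)) : ℝ :=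
  ∑ i : Fin n,
    fderiv ℝ (fun z => fderiv ℝ u z (EuclideanSpace.single i 1)) x (EuclideanSpace.single i 1)

/-!
Energy method. Write `u = ∂ₜy` and `e = c⁻² u² + |∇ₓy|²`. By the wave equation and the symmetry
of second derivatives, `∂ₜe = 2 u Δy + 2 ∇ₓy · ∇ₓu = 2 ∑ᵢ ∂ᵢ(u ∂ᵢy)` is a spatial divergence of a
field supported in `K`, so `∫ e(x, t) dx` does not depend on `t ∈ [0, T]` (FTC in `t` for each
`x`, then Fubini). Since `u(·, 0) = 0` it equals `∫ |∇f|²`, and both bounds follow by dropping one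
of the two nonnegative terms of `e`, using `1 ≤ c_max² c⁻²` for the first.
-/

open Set

section SpaceTime

variable {E : Type*} [NormedAddCommGroup E] [NormedSpace ℝ E]

noncomputable def timeDeriv (g : E × ℝ → ℝ) (p : E × ℝ) : ℝ := fderiv ℝ g p (0, 1)

noncomputable def spaceDeriv (g : E × ℝ → ℝ) (v : E) (p : E × ℝ) : ℝ := fderiv ℝ g p (v, 0)

variable {g h : E × ℝ → ℝ} {x : E} {t : ℝ}

theorem DifferentiableAt.hasDerivAt_timeDeriv (hg : DifferentiableAt ℝ g (x, t)) :
    HasDerivAt (fun s => g (x, s)) (timeDeriv g (x, t)) t :=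
  hg.hasFDerivAt.comp_hasDerivAt t ((hasDerivAt_const t x).prodMk (hasDerivAt_id t))

theorem deriv_comp_prodMk_right (hg : Differentiable ℝ g) (x : E) :
    deriv (fun s => g (x, s)) = fun s => timeDeriv g (x, s) :=
  funext fun _ => (hg _).hasDerivAt_timeDeriv.deriv

theorem DifferentiableAt.fderiv_comp_prodMk_left_apply (hg : DifferentiableAt ℝ g (x, t))
    (v : E) : fderiv ℝ (fun x' => g (x', t)) x v = spaceDeriv g v (x, t) := by
  have hslice : HasFDerivAt (fun x' => g (x', t))
      ((fderiv ℝ g (x, t)).comp (ContinuousLinearMap.inl ℝ E ℝ)) x :=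
    hg.hasFDerivAt.comp x (hasFDerivAt_prodMk_left x t)
  rw [hslice.fderiv]
  rfl

theorem ContDiff.fderiv_apply_const {m : WithTop ℕ∞} (hg : ContDiff ℝ (m + 1) g) (w : E × ℝ) :
    ContDiff ℝ m (fun p => fderiv ℝ g p w) :=
  (hg.fderiv_right le_rfl).clm_apply contDiff_const

theorem ContDiff.timeDeriv {m : WithTop ℕ∞} (hg : ContDiff ℝ (m + 1) g) :
    ContDiff ℝ m (timeDeriv g) :=
  hg.fderiv_apply_const _

theorem ContDiff.spaceDeriv {m : WithTop ℕ∞} (hg : ContDiff ℝ (m + 1) g) (v : E) :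
    ContDiff ℝ m (spaceDeriv g v) :=
  hg.fderiv_apply_const _

theorem fderiv_fderiv_apply_const {p : E × ℝ} (hg : DifferentiableAt ℝ (fderiv ℝ g) p)
    (w q : E × ℝ) : fderiv ℝ (fun p' => fderiv ℝ g p' w) p q = fderiv ℝ (fderiv ℝ g) p q w :=
  congrArg (fun L => L q)
    ((ContinuousLinearMap.apply ℝ ℝ w).hasFDerivAt.comp p hg.hasFDerivAt).fderiv

theorem timeDeriv_spaceDeriv (hg : ContDiff ℝ 2 g) (v : E) :
    timeDeriv (spaceDeriv g v) = spaceDeriv (timeDeriv g) v := by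
  funext p
  change fderiv ℝ (fun p' => fderiv ℝ g p' (v, 0)) p (0, 1) =
    fderiv ℝ (fun p' => fderiv ℝ g p' (0, 1)) p (v, 0)
  have hg' : Differentiable ℝ (fderiv ℝ g) :=
    (hg.fderiv_right (m := 1) le_rfl).differentiable one_ne_zero
  rw [fderiv_fderiv_apply_const (hg' p), fderiv_fderiv_apply_const (hg' p)]
  exact (hg.contDiffAt.isSymmSndFDerivAt (by simp)).eq _ _

theorem spaceDeriv_mul (hg : DifferentiableAt ℝ g (x, t)) (hh : DifferentiableAt ℝ h (x, t))
    (v : E) :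
    spaceDeriv (g * h) v (x, t) =
      spaceDeriv g v (x, t) * h (x, t) + g (x, t) * spaceDeriv h v (x, t) := by
  simp only [spaceDeriv, fderiv_mul' hg hh, op_smul_eq_smul, add_apply, smul_apply, smul_eq_mul]
  ring

theorem spaceDeriv_eq_zero_of_notMem {K : Set E} {I : Set ℝ} (hK : IsClosed K)
    (hg : Differentiable ℝ g) (hgK : ∀ x ∉ K, ∀ t ∈ I, g (x, t) = 0) (hx : x ∉ K) (ht : t ∈ I)
    (v : E) : spaceDeriv g v (x, t) = 0 := by
  have hzero : (fun x' => g (x', t)) =ᶠ[nhds x] fun _ => 0 :=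
    Filter.eventually_of_mem (hK.isOpen_compl.mem_nhds hx) fun x' hx' => hgK x' hx' t ht
  rw [← (hg _).fderiv_comp_prodMk_left_apply, hzero.fderiv_eq]
  simp

theorem timeDeriv_eq_zero_of_notMem {K : Set E} {a b : ℝ} (hab : a < b)
    (hg : Differentiable ℝ g) (hgK : ∀ x ∉ K, ∀ t ∈ Icc a b, g (x, t) = 0) (hx : x ∉ K)
    (ht : t ∈ Icc a b) :
    timeDeriv g (x, t) = 0 :=
  (uniqueDiffOn_Icc hab t ht).eq_deriv _ (hg _).hasDerivAt_timeDeriv.hasDerivWithinAt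
    ((hasDerivWithinAt_const t _ 0).congr (hgK x hx) (hgK x hx t ht))

end SpaceTime

theorem integral_fderiv_apply_eq_zero {E : Type*} [NormedAddCommGroup E] [NormedSpace ℝ E]
    [FiniteDimensional ℝ E] [MeasurableSpace E] [BorelSpace E] {μ : Measure E}
    [μ.IsAddHaarMeasure] {φ : E → ℝ} (hφ : ContDiff ℝ 1 φ) (hsupp : HasCompactSupport φ)
    (v : E) : ∫ x, fderiv ℝ φ x v ∂μ = 0 := by
  have hφ' : Continuous fun x => fderiv ℝ φ x v :=
    (hφ.continuous_fderiv one_ne_zero).clm_apply continuous_const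
  have hparts := integral_mul_fderiv_eq_neg_fderiv_mul_of_integrable (μ := μ)
    (f := fun _ => (1 : ℝ)) (g := φ) (v := v) (by simp)
    (by simpa using hφ'.integrable_of_hasCompactSupport (hsupp.fderiv_apply (𝕜 := ℝ) v))
    (by simpa using hφ.continuous.integrable_of_hasCompactSupport hsupp)
    (fun _ _ => differentiableAt_const _) (fun x _ => hφ.differentiable one_ne_zero x)
  simpa using hparts

theorem integral_spaceDeriv_eq_zero {E : Type*} [NormedAddCommGroup E] [NormedSpace ℝ E]
    [FiniteDimensional ℝ E] [MeasurableSpace E] [BorelSpace E] {μ : Measure E}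
    [μ.IsAddHaarMeasure] {φ : E × ℝ → ℝ} (hφ : ContDiff ℝ 1 φ) {K : Set E} (hK : IsCompact K)
    {t : ℝ} (hφK : ∀ x ∉ K, φ (x, t) = 0) (v : E) : ∫ x, spaceDeriv φ v (x, t) ∂μ = 0 := by
  have hslice : (fun x => spaceDeriv φ v (x, t)) = fun x => fderiv ℝ (fun x' => φ (x', t)) x v :=
    funext fun x => ((hφ.differentiable one_ne_zero _).fderiv_comp_prodMk_left_apply _).symm
  rw [hslice]
  exact integral_fderiv_apply_eq_zero (hφ.comp (contDiff_id.prodMk contDiff_const))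
    (HasCompactSupport.intro hK hφK) _

theorem integrable_prod_restrict_Ioc {X : Type*} [TopologicalSpace X] [T2Space X]
    [MeasurableSpace X] [OpensMeasurableSpace X] {μ : Measure X} [SFinite μ]
    [IsFiniteMeasureOnCompacts μ] {g : X × ℝ → ℝ} (hg : Continuous g) {K : Set X}
    (hK : IsCompact K) {a b : ℝ} (hgK : ∀ x ∉ K, ∀ s ∈ Ioc a b, g (x, s) = 0) :
    Integrable g (μ.prod (volume.restrict (Ioc a b))) := by
  rw [← Measure.restrict_univ (μ := μ), Measure.prod_restrict, ← IntegrableOn]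
  refine IntegrableOn.of_forall_sdiff_eq_zero (s := K ×ˢ Icc a b) ?_
    (MeasurableSet.univ.prod measurableSet_Ioc) ?_
  · exact hg.continuousOn.integrableOn_compact (hK.prod isCompact_Icc)
  · rintro ⟨x, s⟩ ⟨⟨-, hs⟩, hxs⟩
    exact hgK x (fun hx => hxs ⟨hx, Ioc_subset_Icc_self hs⟩) s hs

theorem Continuous.integrable_comp_prodMk_left {X : Type*} [TopologicalSpace X] [R1Space X]
    [MeasurableSpace X] [OpensMeasurableSpace X] {μ : Measure X} [IsFiniteMeasureOnCompacts μ]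
    {g : X × ℝ → ℝ} (hg : Continuous g) {K : Set X} (hK : IsCompact K) {t : ℝ}
    (hgK : ∀ x ∉ K, g (x, t) = 0) : Integrable (fun x => g (x, t)) μ :=
  (hg.comp (continuous_id.prodMk continuous_const)).integrable_of_hasCompactSupport
    (HasCompactSupport.intro hK hgK)

theorem integral_eq_of_hasDerivAt_of_integral_eq_zero {α : Type*} [MeasurableSpace α]
    {μ : Measure α} [SFinite μ] {F D : α → ℝ → ℝ} {a b : ℝ} (hab : a ≤ b)
    (hF : ∀ x, ContinuousOn (F x) (Icc a b))
    (hFD : ∀ x, ∀ s ∈ Ioo a b, HasDerivAt (F x) (D x s) s)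
    (hD : Integrable (Function.uncurry D) (μ.prod (volume.restrict (Ioc a b))))
    (hD_zero : ∀ s ∈ Ioo a b, ∫ x, D x s ∂μ = 0)
    (hFa : Integrable (F · a) μ) (hFb : Integrable (F · b) μ) :
    ∫ x, F x b ∂μ = ∫ x, F x a ∂μ := by
  have hFTC : ∀ᵐ x ∂μ, F x b - F x a = ∫ s in Ioc a b, D x s := by
    filter_upwards [hD.prod_right_ae] with x hx
    rw [← intervalIntegral.integral_of_le hab,
      intervalIntegral.integral_eq_sub_of_hasDerivAt_of_le hab (hF x) (hFD x)
        ((intervalIntegrable_iff_integrableOn_Ioc_of_le hab).2 hx)]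
  have hzero : ∫ x, (F x b - F x a) ∂μ = 0 := by
    rw [integral_congr_ae hFTC, integral_integral_swap hD,
      setIntegral_congr_set Ioo_ae_eq_Ioc.symm]
    exact setIntegral_eq_zero_of_forall_eq_zero hD_zero
  rwa [integral_sub hFb hFa, sub_eq_zero] at hzero

section Wave

variable {n : ℕ}

local notation "ℝⁿ" => EuclideanSpace ℝ (Fin n)

open EuclideanSpace

theorem norm_gradient_sq_eq_sum (g : ℝⁿ → ℝ) (x : ℝⁿ) :
    ‖gradient g x‖ ^ 2 = ∑ i, fderiv ℝ g x (single i 1) ^ 2 := by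
  rw [EuclideanSpace.real_norm_sq_eq]
  congr! 2 with i
  rw [← inner_gradient_left, EuclideanSpace.inner_single_right]
  simp

noncomputable def spaceLaplacian (Y : ℝⁿ × ℝ → ℝ) (p : ℝⁿ × ℝ) : ℝ :=
  ∑ i, spaceDeriv (spaceDeriv Y (single i 1)) (single i 1) p

theorem spatialLaplacian_comp_prodMk_left {Y : ℝⁿ × ℝ → ℝ} (hY : ContDiff ℝ 2 Y) (x : ℝⁿ)
    (t : ℝ) : spatialLaplacian (fun x' => Y (x', t)) x = spaceLaplacian Y (x, t) := by
  have hY1 : Differentiable ℝ Y := hY.differentiable two_ne_zero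
  refine Finset.sum_congr rfl fun i _ => ?_
  have hslice : (fun x'' => fderiv ℝ (fun x' => Y (x', t)) x'' (single i 1)) =
      fun x'' => spaceDeriv Y (single i 1) (x'', t) :=
    funext fun x'' => (hY1 _).fderiv_comp_prodMk_left_apply _
  rw [hslice]
  exact ((hY.spaceDeriv (m := 1) _).differentiable one_ne_zero _).fderiv_comp_prodMk_left_apply _

theorem norm_gradient_comp_prodMk_left_sq {Y : ℝⁿ × ℝ → ℝ} (hY : Differentiable ℝ Y) (x : ℝⁿ)
    (t : ℝ) :
    ‖gradient (fun x' => Y (x', t)) x‖ ^ 2 = ∑ i, spaceDeriv Y (single i 1) (x, t) ^ 2 := by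
  rw [norm_gradient_sq_eq_sum]
  simp only [(hY _).fderiv_comp_prodMk_left_apply]

noncomputable def energyDensity (ρ : ℝⁿ → ℝ) (Y : ℝⁿ × ℝ → ℝ) (p : ℝⁿ × ℝ) : ℝ :=
  ρ p.1 * timeDeriv Y p ^ 2 + ∑ i, spaceDeriv Y (single i 1) p ^ 2

variable {ρ : EuclideanSpace ℝ (Fin n) → ℝ} {Y : EuclideanSpace ℝ (Fin n) × ℝ → ℝ}

theorem sum_sq_spaceDeriv_le_energyDensity {p : ℝⁿ × ℝ} (hρ : 0 ≤ ρ p.1) :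
    ∑ i, spaceDeriv Y (single i 1) p ^ 2 ≤ energyDensity ρ Y p :=
  le_add_of_nonneg_left (by positivity)

theorem sq_timeDeriv_le_mul_energyDensity {p : ℝⁿ × ℝ} {C : ℝ} (hC : 0 ≤ C)
    (hρ : 1 ≤ C * ρ p.1) : timeDeriv Y p ^ 2 ≤ C * energyDensity ρ Y p := calc
  timeDeriv Y p ^ 2 ≤ C * (ρ p.1 * timeDeriv Y p ^ 2) := by
    rw [← mul_assoc]; exact le_mul_of_one_le_left (sq_nonneg _) hρ
  _ ≤ C * energyDensity ρ Y p :=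
    mul_le_mul_of_nonneg_left (le_add_of_nonneg_right (by positivity)) hC

theorem hasDerivAt_energyDensity (hY : ContDiff ℝ 2 Y) {x : ℝⁿ} {t : ℝ}
    (hwave : ρ x * timeDeriv (timeDeriv Y) (x, t) = spaceLaplacian Y (x, t)) :
    HasDerivAt (fun s => energyDensity ρ Y (x, s))
      (2 * ∑ i, spaceDeriv (timeDeriv Y * spaceDeriv Y (single i 1)) (single i 1) (x, t)) t := by
  have hu : Differentiable ℝ (timeDeriv Y) := (hY.timeDeriv (m := 1)).differentiable one_ne_zero
  have hw (i : Fin n) : Differentiable ℝ (spaceDeriv Y (single i 1)) :=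
    (hY.spaceDeriv (m := 1) _).differentiable one_ne_zero
  have hw_t (i : Fin n) : HasDerivAt (fun s => spaceDeriv Y (single i 1) (x, s))
      (spaceDeriv (timeDeriv Y) (single i 1) (x, t)) t := by
    rw [← timeDeriv_spaceDeriv hY]
    exact (hw i _).hasDerivAt_timeDeriv
  have h : HasDerivAt (fun s => energyDensity ρ Y (x, s))
      (ρ x * (2 * timeDeriv Y (x, t) * timeDeriv (timeDeriv Y) (x, t)) +
        ∑ i, 2 * spaceDeriv Y (single i 1) (x, t) * spaceDeriv (timeDeriv Y) (single i 1) (x, t))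
      t := by
    refine ((((hu _).hasDerivAt_timeDeriv.pow 2).const_mul (ρ x)).add
      (HasDerivAt.fun_sum fun i _ => (hw_t i).pow 2)).congr_deriv ?_
    simp
  have hρ : ρ x * (2 * timeDeriv Y (x, t) * timeDeriv (timeDeriv Y) (x, t)) =
      ∑ i, 2 * timeDeriv Y (x, t) *
        spaceDeriv (spaceDeriv Y (single i 1)) (single i 1) (x, t) := by
    rw [← Finset.mul_sum, ← spaceLaplacian, ← hwave]
    ring
  rw [hρ, ← Finset.sum_add_distrib] at h
  convert h using 1
  rw [Finset.mul_sum]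
  refine Finset.sum_congr rfl fun i _ => ?_
  rw [spaceDeriv_mul (hu _) (hw i _)]
  ring

theorem integrable_energyDensity {M : ℝ} {K : Set ℝⁿ} {T t : ℝ} (hY : ContDiff ℝ 1 Y)
    (hρ : AEStronglyMeasurable ρ) (hρM : ∀ x, ‖ρ x‖ ≤ M) (hK : IsCompact K) (hT : 0 < T)
    (hYK : ∀ x ∉ K, ∀ s ∈ Icc 0 T, Y (x, s) = 0) (ht : t ∈ Icc 0 T) :
    Integrable (fun x => energyDensity ρ Y (x, t)) := by
  have hY' : Differentiable ℝ Y := hY.differentiable one_ne_zero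
  have hu : Integrable fun x => timeDeriv Y (x, t) ^ 2 :=
    ((hY.timeDeriv (m := 0)).continuous.pow 2).integrable_comp_prodMk_left hK fun x hx => by
      simp [timeDeriv_eq_zero_of_notMem hT hY' hYK hx ht]
  have hw (i : Fin n) : Integrable fun x => spaceDeriv Y (single i 1) (x, t) ^ 2 :=
    ((hY.spaceDeriv (m := 0) _).continuous.pow 2).integrable_comp_prodMk_left hK fun x hx => by
      simp [spaceDeriv_eq_zero_of_notMem hK.isClosed hY' hYK hx ht]
  exact (hu.bdd_mul hρ (.of_forall hρM)).add (integrable_finsetSum _ fun i _ => hw i)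

theorem integral_energyDensity_eq {M : ℝ} {K : Set ℝⁿ} {T t : ℝ} (hY : ContDiff ℝ 2 Y)
    (hρ : AEStronglyMeasurable ρ) (hρM : ∀ x, ‖ρ x‖ ≤ M) (hK : IsCompact K) (hT : 0 < T)
    (hYK : ∀ x ∉ K, ∀ s ∈ Icc 0 T, Y (x, s) = 0)
    (hwave : ∀ x, ∀ s ∈ Ioo 0 T, ρ x * timeDeriv (timeDeriv Y) (x, s) = spaceLaplacian Y (x, s))
    (ht : t ∈ Icc 0 T) :
    ∫ x, energyDensity ρ Y (x, t) = ∫ x, energyDensity ρ Y (x, 0) := by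
  have hY' : Differentiable ℝ Y := hY.differentiable two_ne_zero
  set φ : Fin n → ℝⁿ × ℝ → ℝ := fun i => timeDeriv Y * spaceDeriv Y (single i 1)
  have hφ (i : Fin n) : ContDiff ℝ 1 (φ i) :=
    (hY.timeDeriv (m := 1)).mul (hY.spaceDeriv (m := 1) _)
  have hφK (i : Fin n) : ∀ x ∉ K, ∀ s ∈ Icc 0 T, φ i (x, s) = 0 := fun x hx s hs => by
    simp [φ, timeDeriv_eq_zero_of_notMem hT hY' hYK hx hs]
  have hdiv (i : Fin n) : Continuous (spaceDeriv (φ i) (single i 1)) :=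
    ((hφ i).spaceDeriv (m := 0) _).continuous
  have hdivK (i : Fin n) : ∀ x ∉ K, ∀ s ∈ Icc 0 T, spaceDeriv (φ i) (single i 1) (x, s) = 0 :=
    fun x hx s hs =>
      spaceDeriv_eq_zero_of_notMem hK.isClosed ((hφ i).differentiable one_ne_zero) (hφK i) hx hs _
  refine integral_eq_of_hasDerivAt_of_integral_eq_zero (F := fun x s => energyDensity ρ Y (x, s))
    (D := fun x s => 2 * ∑ i, spaceDeriv (φ i) (single i 1) (x, s)) ht.1 ?_ ?_ ?_ ?_
    (integrable_energyDensity (hY.of_le one_le_two) hρ hρM hK hT hYK ⟨le_rfl, hT.le⟩)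
    (integrable_energyDensity (hY.of_le one_le_two) hρ hρM hK hT hYK ht)
  · intro x
    have hu := (hY.timeDeriv (m := 1)).continuous
    have hw (i : Fin n) := (hY.spaceDeriv (m := 1) (single i 1)).continuous
    refine Continuous.continuousOn ?_
    simp only [energyDensity]
    fun_prop
  · exact fun x s hs => hasDerivAt_energyDensity hY (hwave x s ⟨hs.1, hs.2.trans_le ht.2⟩)
  · exact integrable_prod_restrict_Ioc
      (continuous_const.mul (continuous_finsetSum _ fun i _ => hdiv i)) hK
      fun x hx s hs => by simp [hdivK _ x hx s ⟨hs.1.le, hs.2.trans ht.2⟩]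
  · intro s hs
    have hs' : s ∈ Icc 0 T := ⟨hs.1.le, hs.2.le.trans ht.2⟩
    rw [integral_const_mul, integral_finsetSum _ fun i _ =>
      (hdiv i).integrable_comp_prodMk_left hK fun x hx => hdivK i x hx s hs']
    exact mul_eq_zero_of_right _ (Finset.sum_eq_zero fun i _ =>
      integral_spaceDeriv_eq_zero (hφ i) hK (fun x hx => hφK i x hx s hs') _)

theorem integral_energyDensity_eq_integral_norm_gradient_sq {M : ℝ} {K : Set ℝⁿ} {T t : ℝ}
    {f : ℝⁿ → ℝ} (hY : ContDiff ℝ 2 Y) (hρ : AEStronglyMeasurable ρ) (hρM : ∀ x, ‖ρ x‖ ≤ M)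
    (hK : IsCompact K) (hT : 0 < T) (hYK : ∀ x ∉ K, ∀ s ∈ Icc 0 T, Y (x, s) = 0)
    (hwave : ∀ x, ∀ s ∈ Ioo 0 T, ρ x * timeDeriv (timeDeriv Y) (x, s) = spaceLaplacian Y (x, s))
    (hY₀ : ∀ x, Y (x, 0) = f x) (hY₀' : ∀ x, timeDeriv Y (x, 0) = 0) (ht : t ∈ Icc 0 T) :
    ∫ x, energyDensity ρ Y (x, t) = ∫ x, ‖gradient f x‖ ^ 2 := by
  rw [integral_energyDensity_eq hY hρ hρM hK hT hYK hwave ht]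
  have hf : f = fun x' => Y (x', 0) := funext fun x' => (hY₀ x').symm
  simp only [energyDensity, hY₀', hf,
    norm_gradient_comp_prodMk_left_sq (hY.differentiable two_ne_zero), zero_pow two_ne_zero,
    mul_zero, zero_add]

end Wave

theorem stmt_1_general
    {n : ℕ}
    (c : EuclideanSpace ℝ (Fin n) → ℝ) (hc_meas : Measurable c)
    (c_min c_max : ℝ) (hc_min_pos : 0 < c_min)
    (hc : ∀ x, c_min ≤ c x ∧ c x ≤ c_max)
    (T : ℝ) (hT : 0 < T)
    (f : EuclideanSpace ℝ (Fin n) → ℝ)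
    (y : EuclideanSpace ℝ (Fin n) → ℝ → ℝ)
    (hy : ContDiff ℝ 2 (fun p : EuclideanSpace ℝ (Fin n) × ℝ => y p.1 p.2))
    (K : Set (EuclideanSpace ℝ (Fin n))) (hK : IsCompact K)
    (hyK : ∀ x ∉ K, ∀ t ∈ Set.Icc (0:ℝ) T, y x t = 0)
    (hwave : ∀ x, ∀ t ∈ Set.Ioo (0:ℝ) T,
      ((c x) ^ 2)⁻¹ * deriv (deriv (y x)) t = spatialLaplacian (fun x' => y x' t) x)
    (hinit : ∀ x, y x 0 = f x)
    (hinit' : ∀ x, deriv (y x) 0 = 0)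
     :
    ∀ t ∈ Set.Icc (0:ℝ) T,
      (∫ x, (deriv (y x) t) ^ 2) ≤ c_max ^ 2 * ∫ x, ‖gradient f x‖ ^ 2
    ∧ (∫ x, ‖gradient (fun x' => y x' t) x‖ ^ 2) ≤ ∫ x, ‖gradient f x‖ ^ 2 := by
  intro t ht
  set Y : EuclideanSpace ℝ (Fin n) × ℝ → ℝ := fun p => y p.1 p.2
  set ρ : EuclideanSpace ℝ (Fin n) → ℝ := fun x => (c x ^ 2)⁻¹
  have hY' : Differentiable ℝ Y := hy.differentiable two_ne_zero
  have hderiv (x : EuclideanSpace ℝ (Fin n)) : deriv (y x) = fun s => timeDeriv Y (x, s) :=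
    deriv_comp_prodMk_right hY' x
  have hc_pos (x : EuclideanSpace ℝ (Fin n)) : 0 < c x := hc_min_pos.trans_le (hc x).1
  have hρM (x : EuclideanSpace ℝ (Fin n)) : ‖ρ x‖ ≤ (c_min ^ 2)⁻¹ := by
    rw [Real.norm_of_nonneg (by positivity)]
    exact inv_anti₀ (by positivity) (pow_le_pow_left₀ hc_min_pos.le (hc x).1 2)
  have hρ : AEStronglyMeasurable ρ := (hc_meas.pow_const 2).inv.aestronglyMeasurable
  have hE := integral_energyDensity_eq_integral_norm_gradient_sq hy hρ hρM hK hT hyK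
    (fun x s hs => by
      rw [← spatialLaplacian_comp_prodMk_left hy, ← hwave x s hs, hderiv,
        deriv_comp_prodMk_right ((hy.timeDeriv (m := 1)).differentiable one_ne_zero)])
    hinit (fun x => (congrFun (hderiv x) 0).symm.trans (hinit' x)) ht
  have hint := integrable_energyDensity (hy.of_le one_le_two) hρ hρM hK hT hyK ht
  have hgrad (x : EuclideanSpace ℝ (Fin n)) : ‖gradient (fun x' => y x' t) x‖ ^ 2 =
      ∑ i, spaceDeriv Y (EuclideanSpace.single i 1) (x, t) ^ 2 :=
    norm_gradient_comp_prodMk_left_sq hY' x t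
  simp only [hderiv, hgrad, ← hE]
  constructor
  · rw [← integral_const_mul]
    refine integral_mono_of_nonneg (.of_forall fun x => sq_nonneg _) (hint.const_mul _)
      (.of_forall fun x => sq_timeDeriv_le_mul_energyDensity (sq_nonneg _) ?_)
    rw [← div_eq_mul_inv, one_le_div (pow_pos (hc_pos x) 2)]
    exact pow_le_pow_left₀ (hc_pos x).le (hc x).2 2
  · exact integral_mono_of_nonneg (.of_forall fun x => by positivity) hint
      (.of_forall fun x => sum_sq_spaceDeriv_le_energyDensity (by positivity))

theorem stmt_1
    {n : ℕ} (hn : 1 ≤ n)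
    (c : EuclideanSpace ℝ (Fin n) → ℝ) (hc_meas : Measurable c)
    (c_min c_max : ℝ) (hc_min_pos : 0 < c_min)
    (hc : ∀ x, c_min ≤ c x ∧ c x ≤ c_max)
    (T : ℝ) (hT : 0 < T)
    (f : EuclideanSpace ℝ (Fin n) → ℝ)
    (hf : ContDiff ℝ 2 f) (hf_supp : HasCompactSupport f)
    (y : EuclideanSpace ℝ (Fin n) → ℝ → ℝ)
    (hy : ContDiff ℝ 2 (fun p : EuclideanSpace ℝ (Fin n) × ℝ => y p.1 p.2))
    (K : Set (EuclideanSpace ℝ (Fin n))) (hK : IsCompact K)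
    (hyK : ∀ x ∉ K, ∀ t ∈ Set.Icc (0:ℝ) T, y x t = 0)
    (hwave : ∀ x, ∀ t ∈ Set.Ioo (0:ℝ) T,
      ((c x) ^ 2)⁻¹ * deriv (deriv (y x)) t = spatialLaplacian (fun x' => y x' t) x)
    (hinit : ∀ x, y x 0 = f x)
    (hinit' : ∀ x, deriv (y x) 0 = 0)
     :
    ∀ t ∈ Set.Icc (0:ℝ) T,
      (∫ x, (deriv (y x) t) ^ 2) ≤ c_max ^ 2 * ∫ x, ‖gradient f x‖ ^ 2
    ∧ (∫ x, ‖gradient (fun x' => y x' t) x‖ ^ 2) ≤ ∫ x, ‖gradient f x‖ ^ 2 :=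
  stmt_1_general c hc_meas c_min c_max hc_min_pos hc T hT f y hy K hK hyK hwave hinit hinit'
end

section
/- Stability of the Landweber iteration with respect to data perturbations: if 0 ≤ ω, ω·‖L‖² ≤ 1, and m, mᵟ ∈ H₂ satisfy ‖m − mᵟ‖ ≤ δ, then for every k ∈ ℕ the iterates for exact and perturbed data satisfy ‖f_k(mᵟ) − f_k(m)‖ ≤ k · ω · ‖L‖ · δ. -/
open ContinuousLinearMap

variable {H₁ H₂ : Type*}
  [NormedAddCommGroup H₁] [InnerProductSpace ℝ H₁] [CompleteSpace H₁]
  [NormedAddCommGroup H₂] [InnerProductSpace ℝ H₂] [CompleteSpace H₂]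

/-- The Landweber iteration with data `g` and step size `ω`:
`f₀ = 0`, `f_{k+1} = f_k - ω • L*(L f_k - g)`. -/
noncomputable def landweber (L : H₁ →L[ℝ] H₂) (ω : ℝ) (g : H₂) : ℕ → H₁
  | 0 => 0
  | k + 1 =>
      landweber L ω g k - ω • (ContinuousLinearMap.adjoint L) (L (landweber L ω g k) - g)

lemma norm_adjoint_apply_le (L : H₁ →L[ℝ] H₂) (y : H₂) : ‖adjoint L y‖ ≤ ‖L‖ * ‖y‖ := by
  simpa only [adjoint.norm_map] using (adjoint L).le_opNorm y

lemma norm_sub_smul_adjoint_comp_apply_le (L : H₁ →L[ℝ] H₂) {ω : ℝ} (hω : 0 ≤ ω)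
    (hωL : ω * ‖L‖ ^ 2 ≤ 1) (x : H₁) : ‖x - ω • adjoint L (L x)‖ ≤ ‖x‖ := by
  have h_expand : ‖x - ω • adjoint L (L x)‖ ^ 2
      = ‖x‖ ^ 2 - 2 * ω * ‖L x‖ ^ 2 + ω ^ 2 * ‖adjoint L (L x)‖ ^ 2 := by
    rw [norm_sub_sq_real, real_inner_smul_right, adjoint_inner_right, real_inner_self_eq_norm_sq,
      norm_smul, Real.norm_eq_abs, mul_pow, sq_abs]
    ring
  have h_adj : ω ^ 2 * ‖adjoint L (L x)‖ ^ 2 ≤ ω * ‖L x‖ ^ 2 :=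
    calc ω ^ 2 * ‖adjoint L (L x)‖ ^ 2 ≤ ω ^ 2 * (‖L‖ * ‖L x‖) ^ 2 := by
          gcongr; exact norm_adjoint_apply_le L (L x)
      _ = (ω * ‖L‖ ^ 2) * (ω * ‖L x‖ ^ 2) := by ring
      _ ≤ ω * ‖L x‖ ^ 2 := mul_le_of_le_one_left (by positivity) hωL
  have h_sq : ‖x - ω • adjoint L (L x)‖ ^ 2 ≤ ‖x‖ ^ 2 := by
    linarith [mul_nonneg hω (sq_nonneg ‖L x‖)]
  exact (sq_le_sq₀ (norm_nonneg _) (norm_nonneg _)).mp h_sq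

lemma landweber_succ_sub_landweber_succ (L : H₁ →L[ℝ] H₂) (ω : ℝ) (g g' : H₂) (k : ℕ) :
    landweber L ω g' (k + 1) - landweber L ω g (k + 1)
      = (landweber L ω g' k - landweber L ω g k)
          - ω • adjoint L (L (landweber L ω g' k - landweber L ω g k))
        + ω • adjoint L (g' - g) := by
  simp only [landweber, map_sub, smul_sub]
  abel

/-- Each step is a contraction plus a perturbation `ω L*(g' - g)`, so errors add up linearly. -/
lemma norm_landweber_sub_landweber_le (L : H₁ →L[ℝ] H₂) {ω : ℝ} (hω : 0 ≤ ω)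
    (hωL : ω * ‖L‖ ^ 2 ≤ 1) (g g' : H₂) (k : ℕ) :
    ‖landweber L ω g' k - landweber L ω g k‖ ≤ k * ω * ‖L‖ * ‖g' - g‖ := by
  induction k with
  | zero => simp [landweber]
  | succ k ih =>
    rw [landweber_succ_sub_landweber_succ]
    set e := landweber L ω g' k - landweber L ω g k
    have h_pert : ‖ω • adjoint L (g' - g)‖ ≤ ω * ‖L‖ * ‖g' - g‖ := by
      rw [norm_smul, Real.norm_of_nonneg hω, mul_assoc]
      gcongr
      exact norm_adjoint_apply_le L _
    calc ‖e - ω • adjoint L (L e) + ω • adjoint L (g' - g)‖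
        ≤ ‖e - ω • adjoint L (L e)‖ + ‖ω • adjoint L (g' - g)‖ := norm_add_le _ _
      _ ≤ ‖e‖ + ω * ‖L‖ * ‖g' - g‖ :=
          add_le_add (norm_sub_smul_adjoint_comp_apply_le L hω hωL e) h_pert
      _ ≤ k * ω * ‖L‖ * ‖g' - g‖ + ω * ‖L‖ * ‖g' - g‖ := by gcongr
      _ = ((k + 1 : ℕ) : ℝ) * ω * ‖L‖ * ‖g' - g‖ := by push_cast; ring

theorem stmt_8 (L : H₁ →L[ℝ] H₂) (ω : ℝ) (hω : 0 ≤ ω) (hωL : ω * ‖L‖ ^ 2 ≤ 1)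
    (m mδ : H₂) (δ : ℝ) (hδ : ‖m - mδ‖ ≤ δ) :
    ∀ k : ℕ, ‖landweber L ω mδ k - landweber L ω m k‖ ≤ (k : ℝ) * ω * ‖L‖ * δ := by
  intro k
  calc ‖landweber L ω mδ k - landweber L ω m k‖ ≤ k * ω * ‖L‖ * ‖mδ - m‖ :=
        norm_landweber_sub_landweber_le L hω hωL m mδ k
    _ ≤ k * ω * ‖L‖ * δ := by
        rw [norm_sub_rev]
        gcongr
end

section
/- If 0 < ω and ω·‖L‖² ≤ 1, then for every g ∈ H₂ the images L f_k(g) of the Landweber iterates converge, as k → ∞, to the orthogonal projection of g onto the topological closure of the range of L. -/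
open ContinuousLinearMap Filter

variable {H₁ H₂ : Type*}
  [NormedAddCommGroup H₁] [InnerProductSpace ℝ H₁] [CompleteSpace H₁]
  [NormedAddCommGroup H₂] [InnerProductSpace ℝ H₂] [CompleteSpace H₂]

/-!
The residuals `g - L fₖ` are `Rᵏ g` for the self-adjoint map `R = 1 - ω L L*`, and the step-size
condition gives `‖R x‖² + ω ‖L* x‖² ≤ ‖x‖²`. Along every orbit `‖Rᵏ x‖²` therefore decreases, with
decrements dominating `ω ‖L* Rᵏ x‖²`, so `L* Rᵏ x → 0`. For `v = L w` this yields
`‖Rᵏ v‖² = ⟪L* R²ᵏ v, w⟫ → 0`, and since `R` is a contraction, `Rᵏ v → 0` on the whole closure `K`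
of the range of `L`. Finally `g - P_K g ∈ Kᗮ = ker L*` is fixed by `R`, so
`g - L fₖ = Rᵏ (P_K g) + (g - P_K g) → g - P_K g`.
-/

open scoped RealInnerProductSpace Topology

theorem tendsto_zero_of_tendsto_norm_sq {α E : Type*} [SeminormedAddCommGroup E] {l : Filter α}
    {f : α → E} (h : Tendsto (fun a => ‖f a‖ ^ 2) l (𝓝 0)) : Tendsto f l (𝓝 0) := by
  rw [tendsto_zero_iff_norm_tendsto_zero]
  simpa [Real.sqrt_sq (norm_nonneg _)] using h.sqrt

theorem isClosed_setOf_tendsto_pow_apply_zero {𝕜 X : Type*} [NontriviallyNormedField 𝕜]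
    [NormedAddCommGroup X] [NormedSpace 𝕜 X] {T : X →L[𝕜] X} (hT : ∀ x, ‖T x‖ ≤ ‖x‖) :
    IsClosed {x | Tendsto (fun k => (T ^ k) x) atTop (𝓝 0)} := by
  have hpow : ∀ k x, ‖(T ^ k) x‖ ≤ 1 * ‖x‖ := fun k x => by
    induction k with
    | zero => simp
    | succ k ih => rw [pow_succ', mul_apply_eq_comp]; exact (hT _).trans ih
  have hequi := (NormedSpace.equicontinuous_TFAE fun k : ℕ => T ^ k).out 3 1
  exact (hequi.mp ⟨1, hpow⟩).isClosed_setOfPred_tendsto (f := fun _ => 0) continuous_const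

section PowersOfContraction

variable {H E : Type*} [NormedAddCommGroup H] [InnerProductSpace ℝ H]
  [NormedAddCommGroup E] [InnerProductSpace ℝ E]

theorem tendsto_apply_pow_apply_zero_of_norm_sq_add_le {T : H →L[ℝ] H} {B : H →L[ℝ] E} {c : ℝ}
    (hc : 0 < c) (hTB : ∀ x, ‖T x‖ ^ 2 + c * ‖B x‖ ^ 2 ≤ ‖x‖ ^ 2) (x : H) :
    Tendsto (fun k => B ((T ^ k) x)) atTop (𝓝 0) := by
  set b : ℕ → ℝ := fun k => ‖(T ^ k) x‖ ^ 2
  have hdecr : ∀ k, c * ‖B ((T ^ k) x)‖ ^ 2 ≤ b k - b (k + 1) := fun k => by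
    have := hTB ((T ^ k) x)
    simp only [b, pow_succ', mul_apply_eq_comp]
    linarith
  have hanti : Antitone b :=
    antitone_nat_of_succ_le fun k => by
      linarith [hdecr k, mul_nonneg hc.le (sq_nonneg ‖B ((T ^ k) x)‖)]
  have hconv := tendsto_atTop_ciInf hanti ⟨0, by rintro _ ⟨k, rfl⟩; positivity⟩
  have hgap : Tendsto (fun k => (b k - b (k + 1)) / c) atTop (𝓝 0) := by
    simpa using (hconv.sub (hconv.comp (tendsto_add_atTop_nat 1))).div_const c
  refine tendsto_zero_of_tendsto_norm_sq (squeeze_zero (fun k => by positivity) (fun k => ?_) hgap)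
  rw [le_div_iff₀ hc, mul_comm]
  exact hdecr k

variable [CompleteSpace H] [CompleteSpace E]

theorem tendsto_pow_apply_zero_of_mem_range {T : H →L[ℝ] H} (hT : IsSelfAdjoint T)
    {C : E →L[ℝ] H} (hC : ∀ x, Tendsto (fun k => adjoint C ((T ^ k) x)) atTop (𝓝 0)) (w : E) :
    Tendsto (fun k => (T ^ k) (C w)) atTop (𝓝 0) := by
  have hsq : ∀ k, ‖(T ^ k) (C w)‖ ^ 2 = ⟪adjoint C ((T ^ (k + k)) (C w)), w⟫ := fun k => by
    rw [adjoint_inner_left, pow_add, mul_apply_eq_comp,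
      ← adjoint_inner_right, (hT.pow k).adjoint_eq, real_inner_self_eq_norm_sq]
  refine tendsto_zero_of_tendsto_norm_sq ?_
  simp only [hsq]
  have hdouble : Tendsto (fun k : ℕ => k + k) atTop atTop :=
    tendsto_atTop_mono (fun k => Nat.le_add_left k k) tendsto_id
  simpa using ((hC (C w)).comp hdouble).inner tendsto_const_nhds

theorem tendsto_pow_apply_zero_of_mem_closure_range {T : H →L[ℝ] H} (hT : IsSelfAdjoint T)
    {C : E →L[ℝ] H} {c : ℝ} (hc : 0 < c)
    (hTC : ∀ x, ‖T x‖ ^ 2 + c * ‖adjoint C x‖ ^ 2 ≤ ‖x‖ ^ 2) {v : H}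
    (hv : v ∈ (LinearMap.range (C : E →ₗ[ℝ] H)).topologicalClosure) :
    Tendsto (fun k => (T ^ k) v) atTop (𝓝 0) := by
  have hcontr : ∀ x, ‖T x‖ ≤ ‖x‖ := fun x =>
    (pow_le_pow_iff_left₀ (norm_nonneg _) (norm_nonneg _) two_ne_zero).mp
      (by nlinarith [hTC x, sq_nonneg ‖adjoint C x‖])
  refine closure_minimal ?_ (isClosed_setOf_tendsto_pow_apply_zero hcontr) hv
  rintro _ ⟨w, rfl⟩
  exact tendsto_pow_apply_zero_of_mem_range hT
    (tendsto_apply_pow_apply_zero_of_norm_sq_add_le hc hTC) w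

end PowersOfContraction

noncomputable def landweberResidualMap (L : H₁ →L[ℝ] H₂) (ω : ℝ) : H₂ →L[ℝ] H₂ :=
  1 - ω • (L ∘L adjoint L)

theorem sub_apply_landweber (L : H₁ →L[ℝ] H₂) (ω : ℝ) (g : H₂) (k : ℕ) :
    g - L (landweber L ω g k) = (landweberResidualMap L ω ^ k) g := by
  induction k with
  | zero => simp [landweber]
  | succ k ih =>
    rw [pow_succ', mul_apply_eq_comp, ← ih, landweber, landweberResidualMap]
    simp only [map_sub, map_smul, sub_apply, one_apply_eq_self, smul_apply, comp_apply]
    module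

theorem isSelfAdjoint_landweberResidualMap (L : H₁ →L[ℝ] H₂) (ω : ℝ) :
    IsSelfAdjoint (landweberResidualMap L ω) :=
  (IsSelfAdjoint.one _).sub
    ((IsSelfAdjoint.all ω).smul (isPositive_self_comp_adjoint L).isSelfAdjoint)

theorem norm_landweberResidualMap_apply_sq_add_le {L : H₁ →L[ℝ] H₂} {ω : ℝ} (hω : 0 ≤ ω)
    (hωL : ω * ‖L‖ ^ 2 ≤ 1) (x : H₂) :
    ‖landweberResidualMap L ω x‖ ^ 2 + ω * ‖adjoint L x‖ ^ 2 ≤ ‖x‖ ^ 2 := by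
  have hinner : ⟪x, L (adjoint L x)⟫ = ‖adjoint L x‖ ^ 2 := by
    rw [← adjoint_inner_left, real_inner_self_eq_norm_sq]
  have hLL : ‖L (adjoint L x)‖ ^ 2 ≤ ‖L‖ ^ 2 * ‖adjoint L x‖ ^ 2 := by
    rw [← mul_pow]
    exact pow_le_pow_left₀ (norm_nonneg _) (L.le_opNorm _) 2
  have hexpand : ‖landweberResidualMap L ω x‖ ^ 2
      = ‖x‖ ^ 2 - 2 * ω * ‖adjoint L x‖ ^ 2 + ω ^ 2 * ‖L (adjoint L x)‖ ^ 2 := by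
    simp only [landweberResidualMap, sub_apply, one_apply_eq_self, smul_apply, comp_apply]
    rw [norm_sub_sq_real, real_inner_smul_right, hinner, norm_smul, mul_pow, Real.norm_eq_abs,
      sq_abs]
    ring
  nlinarith [mul_le_mul_of_nonneg_left hLL (sq_nonneg ω), mul_nonneg hω (sq_nonneg ‖adjoint L x‖)]

theorem landweberResidualMap_pow_apply_of_mem_orthogonal (L : H₁ →L[ℝ] H₂) (ω : ℝ) {u : H₂}
    (hu : u ∈ (LinearMap.range (L : H₁ →ₗ[ℝ] H₂))ᗮ) (k : ℕ) :
    (landweberResidualMap L ω ^ k) u = u := by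
  have hker : adjoint L u = 0 := by rwa [orthogonal_range] at hu
  induction k with
  | zero => rfl
  | succ k ih =>
    rw [pow_succ', mul_apply_eq_comp, ih]
    simp [landweberResidualMap, hker]

theorem stmt_9 (L : H₁ →L[ℝ] H₂) (ω : ℝ) (hω : 0 < ω) (hωL : ω * ‖L‖ ^ 2 ≤ 1) :
    ∀ g : H₂,
      Tendsto (fun k => L (landweber L ω g k)) atTop
        (nhds (Submodule.orthogonalProjectionOnto (LinearMap.range (L : H₁ →ₗ[ℝ] H₂)).topologicalClosure g : H₂)) := by
  intro g
  set K := (LinearMap.range (L : H₁ →ₗ[ℝ] H₂)).topologicalClosure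
  set p : H₂ := (K.orthogonalProjectionOnto g : H₂)
  set R := landweberResidualMap L ω
  have hp : Tendsto (fun k => (R ^ k) p) atTop (𝓝 0) :=
    tendsto_pow_apply_zero_of_mem_closure_range (isSelfAdjoint_landweberResidualMap L ω) hω
      (norm_landweberResidualMap_apply_sq_add_le hω.le hωL) (K.orthogonalProjectionOnto g).2
  have hfix : ∀ k, (R ^ k) (g - p) = g - p := by
    have hperp : g - p ∈ (LinearMap.range (L : H₁ →ₗ[ℝ] H₂))ᗮ := by
      rw [← Submodule.orthogonal_closure]
      exact K.sub_starProjection_mem_orthogonal g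
    exact landweberResidualMap_pow_apply_of_mem_orthogonal L ω hperp
  have hres : ∀ k, g - L (landweber L ω g k) = (R ^ k) p + (g - p) := fun k => by
    rw [sub_apply_landweber, ← hfix k, ← map_add, add_sub_cancel]
  have hres_lim : Tendsto (fun k => g - L (landweber L ω g k)) atTop (𝓝 (g - p)) := by
    simpa [hres] using hp.add_const (g - p)
  simpa using (tendsto_const_nhds (x := g)).sub hres_lim
end

section
/- Convergence of the noise-free Landweber iteration: if m lies in the range of L, 0 < ω, and ω·‖L‖² ≤ 1, then the Landweber iterates f_k(m) converge in norm, as k → ∞, to the minimum-norm solution f†, i.e. to the unique element f† of the orthogonal complement of the kernel of L satisfying L f† = m. -/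
/-!
Put `S = 1 - ω L†L`; the step-size conditions give `0 ≤ S ≤ 1`, and for `m = L f` the
iterates are `f - Sᵏ f`. For such an `S` the numbers `b n = ⟪Sⁿ x, x⟫` decrease to a limit `β`
(positivity of `1 - S` and of `S - S²` compares consecutive terms), and
`‖Sⁿ x - Sᵐ x‖² = b (2n) - 2 b (n + m) + b (2m) ≤ b (2n) - β` for `n ≤ m`, so `Sᵏ f` converges to
some `p`. Then `S p = p`, i.e. `L†L p = 0`, i.e. `L p = 0`, so `f† = f - p` solves `L f† = m`; it
lies in `(ker L)ᗮ` because every iterate lies in `range L† ⊆ (ker L)ᗮ` and that space is closed.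
-/

open ContinuousLinearMap Filter

variable {H₁ H₂ : Type*}
  [NormedAddCommGroup H₁] [InnerProductSpace ℝ H₁] [CompleteSpace H₁]
  [NormedAddCommGroup H₂] [InnerProductSpace ℝ H₂] [CompleteSpace H₂]

open Topology
open scoped RealInnerProductSpace InnerProduct

namespace ContinuousLinearMap

variable {E : Type*} [NormedAddCommGroup E] [InnerProductSpace ℝ E] {S : E →L[ℝ] E}

lemma IsPositive.inner_pow_add_apply (hS : S.IsPositive) (k l : ℕ) (x y : E) :
    ⟪(S ^ (k + l)) x, y⟫ = ⟪(S ^ k) x, (S ^ l) y⟫ := by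
  have hSl : ((S ^ l : E →L[ℝ] E) : E →ₗ[ℝ] E).IsSymmetric := by
    rw [toLinearMap_pow]; exact hS.isSymmetric.pow l
  rw [add_comm, pow_add, mul_apply_eq_comp]
  exact hSl _ _

lemma IsPositive.inner_pow_two_mul_add_apply_self (hS : S.IsPositive) (j r : ℕ) (x : E) :
    ⟪(S ^ (2 * j + r)) x, x⟫ = ⟪(S ^ r) ((S ^ j) x), (S ^ j) x⟫ := by
  rw [show 2 * j + r = (r + j) + j by ring, hS.inner_pow_add_apply, pow_add, mul_apply_eq_comp]

lemma inner_apply_self_le_norm_sq (hS : S ≤ 1) (x : E) : ⟪S x, x⟫ ≤ ‖x‖ ^ 2 := by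
  have := ((le_def S 1).mp hS).inner_nonneg_left x
  rwa [sub_apply, one_apply_eq_self, inner_sub_left, real_inner_self_eq_norm_sq,
    sub_nonneg] at this

lemma norm_sq_apply_le_inner_apply_self (hS₀ : 0 ≤ S) (hS₁ : S ≤ 1) (x : E) :
    ‖S x‖ ^ 2 ≤ ⟪S x, x⟫ := by
  have hS := (nonneg_iff_isPositive S).mp hS₀
  -- expand `0 ≤ ⟪S (x - S x), x - S x⟫` and bound its last term by `S ≤ 1`
  have h₀ := hS.inner_nonneg_left (x - S x)
  have h₁ := inner_apply_self_le_norm_sq hS₁ (S x)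
  rw [map_sub, inner_sub_left, inner_sub_right, inner_sub_right,
    hS.inner_left_eq_inner_right (S x) x, real_inner_self_eq_norm_sq] at h₀
  linarith [real_inner_comm (S x) x]

lemma antitone_inner_pow_apply_self (hS₀ : 0 ≤ S) (hS₁ : S ≤ 1) (x : E) :
    Antitone fun n => ⟪(S ^ n) x, x⟫ := by
  have hS := (nonneg_iff_isPositive S).mp hS₀
  -- with `y = Sʲ x`, the terms of index `2j, 2j+1, 2j+2` are `‖y‖², ⟪S y, y⟫, ‖S y‖²`
  refine antitone_nat_of_succ_le fun n => ?_
  obtain ⟨j, rfl | rfl⟩ := Nat.even_or_odd' n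
  · have h₀ := hS.inner_pow_two_mul_add_apply_self j 0 x
    have h₁ := hS.inner_pow_two_mul_add_apply_self j 1 x
    have h := inner_apply_self_le_norm_sq hS₁ ((S ^ j) x)
    simp only [add_zero, pow_zero, pow_one, one_apply_eq_self] at h₀ h₁
    rw [h₀, h₁, real_inner_self_eq_norm_sq]
    exact h
  · have h₁ := hS.inner_pow_two_mul_add_apply_self j 1 x
    have h₂ := hS.inner_pow_two_mul_add_apply_self j 2 x
    have h := norm_sq_apply_le_inner_apply_self hS₀ hS₁ ((S ^ j) x)
    simp only [pow_one, pow_two, mul_apply_eq_comp] at h₁ h₂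
    rw [show 2 * j + 1 + 1 = 2 * j + 2 by ring, h₁, h₂,
      hS.inner_left_eq_inner_right, real_inner_self_eq_norm_sq]
    exact h

lemma inner_pow_apply_self_nonneg (hS₀ : 0 ≤ S) (hS₁ : S ≤ 1) (x : E) (n : ℕ) :
    0 ≤ ⟪(S ^ n) x, x⟫ := by
  have hS := (nonneg_iff_isPositive S).mp hS₀
  calc 0 ≤ ⟪(S ^ n) x, (S ^ n) x⟫ := real_inner_self_nonneg
    _ = ⟪(S ^ (n + n)) x, x⟫ := (hS.inner_pow_add_apply n n x x).symm
    _ ≤ ⟪(S ^ n) x, x⟫ := antitone_inner_pow_apply_self hS₀ hS₁ x (Nat.le_add_right n n)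

lemma cauchySeq_pow_apply (hS₀ : 0 ≤ S) (hS₁ : S ≤ 1) (x : E) :
    CauchySeq fun n => (S ^ n) x := by
  have hS := (nonneg_iff_isPositive S).mp hS₀
  set b : ℕ → ℝ := fun n => ⟪(S ^ n) x, x⟫ with hb_def
  have hb : Antitone b := antitone_inner_pow_apply_self hS₀ hS₁ x
  have hbdd : BddBelow (Set.range b) :=
    ⟨0, Set.forall_mem_range.2 (inner_pow_apply_self_nonneg hS₀ hS₁ x)⟩
  set β := ⨅ n, b n
  have hβ : Tendsto b atTop (𝓝 β) := tendsto_atTop_ciInf hb hbdd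
  have hnorm : ∀ n m,
      ‖(S ^ n) x - (S ^ m) x‖ ^ 2 = b (n + n) - 2 * b (n + m) + b (m + m) := by
    intro n m
    simp only [hb_def, hS.inner_pow_add_apply, norm_sub_sq_real, real_inner_self_eq_norm_sq]
  refine cauchySeq_of_le_tendsto_0' (fun n => √(b (n + n) - β)) (fun n m hnm => ?_) ?_
  · have h₁ : b (m + m) ≤ b (n + m) := hb (by omega)
    have h₂ : β ≤ b (n + m) := ciInf_le hbdd _
    rw [dist_eq_norm]
    exact Real.le_sqrt_of_sq_le (by linarith [hnorm n m])
  · have h_double : Tendsto (fun n : ℕ => n + n) atTop atTop :=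
      tendsto_atTop_mono (fun n => Nat.le_add_right n n) tendsto_id
    simpa using ((hβ.comp h_double).sub_const β).sqrt

lemma exists_isFixedPt_tendsto_pow_apply [CompleteSpace E] (hS₀ : 0 ≤ S) (hS₁ : S ≤ 1) (x : E) :
    ∃ p, Function.IsFixedPt S p ∧ Tendsto (fun n => (S ^ n) x) atTop (𝓝 p) := by
  obtain ⟨p, hp⟩ := cauchySeq_tendsto_of_complete (cauchySeq_pow_apply hS₀ hS₁ x)
  refine ⟨p, tendsto_nhds_unique ?_ (hp.comp (tendsto_add_atTop_nat 1)), hp⟩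
  simpa only [Function.comp_def, pow_succ', mul_apply_eq_comp] using
    (S.continuous.tendsto p).comp hp

end ContinuousLinearMap

section Landweber

variable (L : H₁ →L[ℝ] H₂)

lemma landweber_apply_eq_sub_pow_apply (ω : ℝ) (f : H₁) (k : ℕ) :
    landweber L ω (L f) k = f - ((1 - ω • (L† ∘L L)) ^ k) f := by
  induction k with
  | zero => simp [landweber]
  | succ k ih =>
    rw [landweber, ih, pow_succ', mul_apply_eq_comp]
    simp only [map_sub, sub_apply, one_apply_eq_self, smul_apply, comp_apply, smul_sub]
    abel

lemma landweber_mem_orthogonal_ker (ω : ℝ) (g : H₂) (k : ℕ) :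
    landweber L ω g k ∈ (LinearMap.ker (L : H₁ →ₗ[ℝ] H₂))ᗮ := by
  induction k with
  | zero => exact Submodule.zero_mem _
  | succ k ih =>
    refine Submodule.sub_mem _ ih (Submodule.smul_mem _ _ ?_)
    rw [← L.coe_coe, L.orthogonal_ker]
    exact Submodule.le_topologicalClosure _ ⟨_, rfl⟩

lemma one_sub_smul_adjoint_comp_self_nonneg {ω : ℝ} (hωL : ω * ‖L‖ ^ 2 ≤ 1) :
    0 ≤ 1 - ω • (L† ∘L L) := by
  rw [nonneg_iff_isPositive, isPositive_iff']
  refine ⟨(IsSelfAdjoint.one _).sub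
    ((IsSelfAdjoint.all ω).smul (isPositive_adjoint_comp_self L).isSelfAdjoint), fun x => ?_⟩
  simp only [sub_apply, one_apply_eq_self, smul_apply, comp_apply, inner_sub_left,
    real_inner_smul_left, adjoint_inner_left, real_inner_self_eq_norm_sq, sub_nonneg]
  have hLx : ‖L x‖ ^ 2 ≤ ‖L‖ ^ 2 * ‖x‖ ^ 2 := by
    rw [← mul_pow]; exact pow_le_pow_left₀ (norm_nonneg _) (L.le_opNorm x) 2
  rcases le_or_gt 0 ω with hω | hω
  · nlinarith [mul_le_mul_of_nonneg_left hLx hω, sq_nonneg ‖x‖]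
  · nlinarith [sq_nonneg ‖L x‖, sq_nonneg ‖x‖]

lemma one_sub_smul_adjoint_comp_self_le_one {ω : ℝ} (hω : 0 ≤ ω) : 1 - ω • (L† ∘L L) ≤ 1 := by
  rw [ContinuousLinearMap.le_def, sub_sub_cancel]
  exact (isPositive_adjoint_comp_self L).smul_of_nonneg hω

lemma apply_eq_zero_of_isFixedPt_one_sub_smul_adjoint_comp_self {ω : ℝ} (hω : ω ≠ 0) {p : H₁}
    (hp : Function.IsFixedPt ⇑(1 - ω • (L† ∘L L)) p) : L p = 0 := by
  rw [Function.IsFixedPt, sub_apply, one_apply_eq_self, sub_eq_self, smul_apply,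
    smul_eq_zero] at hp
  have hp' : p ∈ (L† ∘L L).ker := hp.resolve_left hω
  rwa [ker_adjoint_comp_self] at hp'

end Landweber

theorem stmt_11 (L : H₁ →L[ℝ] H₂) (m : H₂) (hm : m ∈ LinearMap.range (L : H₁ →ₗ[ℝ] H₂))
    (ω : ℝ) (hω : 0 < ω) (hωL : ω * ‖L‖ ^ 2 ≤ 1) :
    ∃ fdag : H₁, (L fdag = m ∧ fdag ∈ (LinearMap.ker (L : H₁ →ₗ[ℝ] H₂))ᗮ) ∧
      Tendsto (fun k => landweber L ω m k) atTop (nhds fdag) := by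
  obtain ⟨f, rfl⟩ := hm
  obtain ⟨p, hSp, hp⟩ := exists_isFixedPt_tendsto_pow_apply
    (one_sub_smul_adjoint_comp_self_nonneg L hωL) (one_sub_smul_adjoint_comp_self_le_one L hω.le) f
  have hLp : L p = 0 := apply_eq_zero_of_isFixedPt_one_sub_smul_adjoint_comp_self L hω.ne' hSp
  have hconv : Tendsto (fun k => landweber L ω (L f) k) atTop (𝓝 (f - p)) := by
    simpa only [landweber_apply_eq_sub_pow_apply] using tendsto_const_nhds.sub hp
  refine ⟨f - p, ⟨by simp [hLp], ?_⟩, hconv⟩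
  exact (Submodule.isClosed_orthogonal _).mem_of_tendsto hconv
    (.of_forall (landweber_mem_orthogonal_ker L ω (L f)))
end

section
/- Series expansion of the minimum-norm solution: if m lies in the range of L, 0 < ω, and ω·‖L‖² ≤ 1, then the series Σ_{j=0}^∞ (Id_{H₁} − ω·L*L)^j (ω · L* m) converges in H₁ (in the sense of HasSum) and its sum equals the minimum-norm solution f†, i.e. the unique element of the orthogonal complement of the kernel of L satisfying L f† = m. -/
/-!
With `A = ω L†L`, a positive operator with `‖A‖ ≤ 1`, the partial sums telescope:
`∑_{j<n} (1 - A)^j (A f) = f - (1 - A)^n f`. The inequality `‖A y‖² + ‖(1 - A) y‖² ≤ ‖y‖²`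
makes `∑ₙ ‖A (1 - A)^n u‖²` finite, so `(1 - A)^n → 0` pointwise on the range of `A`, hence, the
powers being contractions, on its closure `(ker A)ᗮ = (ker L)ᗮ`, which contains `f†`.
Convergence is even unconditional: since `1 - A` is positive, the terms `(1 - A)^j (A f)` have
pairwise nonnegative inner products, so norms of finite subsums grow with the index set and the
Cauchy criterion for finite sets follows from that for the partial sums.
-/

open ContinuousLinearMap Filter Topology Finset
open scoped InnerProductSpace InnerProduct

section InnerNonneg

variable {F : Type*} [NormedAddCommGroup F] [InnerProductSpace ℝ F]

theorem norm_sum_le_norm_sum_of_subset_of_inner_nonneg {ι : Type*} {v : ι → F}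
    (hv : ∀ i j, 0 ≤ ⟪v i, v j⟫_ℝ) {s t : Finset ι} (hst : s ⊆ t) :
    ‖∑ i ∈ s, v i‖ ≤ ‖∑ i ∈ t, v i‖ := by
  classical
  have hcross : 0 ≤ ⟪∑ i ∈ t \ s, v i, ∑ i ∈ s, v i⟫_ℝ := by
    rw [sum_inner]
    exact sum_nonneg fun i _ => by
      rw [inner_sum]
      exact sum_nonneg fun j _ => hv i j
  have hsq : ‖∑ i ∈ s, v i‖ ^ 2 ≤ ‖∑ i ∈ t, v i‖ ^ 2 := by
    rw [← sum_sdiff hst, norm_add_sq_real]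
    linarith [sq_nonneg ‖∑ i ∈ t \ s, v i‖]
  exact (pow_le_pow_iff_left₀ (norm_nonneg _) (norm_nonneg _) two_ne_zero).mp hsq

theorem hasSum_of_tendsto_sum_range_of_inner_nonneg {v : ℕ → F} (hv : ∀ i j, 0 ≤ ⟪v i, v j⟫_ℝ)
    {x : F} (h : Tendsto (fun n => ∑ i ∈ range n, v i) atTop (𝓝 x)) : HasSum v x := by
  have hcauchy : CauchySeq fun s : Finset ℕ => ∑ i ∈ s, v i := by
    rw [cauchySeq_finset_iff_vanishing_norm]
    intro ε hε
    obtain ⟨N, hN⟩ := Metric.cauchySeq_iff'.mp h.cauchySeq ε hε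
    refine ⟨range N, fun t ht => ?_⟩
    obtain ⟨M, htM⟩ := t.exists_nat_subset_range
    have hNM : range N ⊆ range (max M N) := range_subset_range.mpr (le_max_right M N)
    have htM' : t ⊆ range (max M N) \ range N := fun i hi =>
      mem_sdiff.mpr ⟨range_subset_range.mpr (le_max_left M N) (htM hi), disjoint_left.mp ht hi⟩
    calc ‖∑ i ∈ t, v i‖ ≤ ‖∑ i ∈ range (max M N) \ range N, v i‖ :=
          norm_sum_le_norm_sum_of_subset_of_inner_nonneg hv htM'
      _ = dist (∑ i ∈ range (max M N), v i) (∑ i ∈ range N, v i) := by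
          rw [dist_eq_norm, ← sum_sdiff hNM, add_sub_cancel_right]
      _ < ε := hN _ (le_max_right M N)
  exact tendsto_nhds_of_cauchySeq_of_subseq hcauchy tendsto_finset_range h

end InnerNonneg

namespace ContinuousLinearMap

theorem sum_range_one_sub_pow_apply {R M : Type*} [Ring R] [TopologicalSpace M]
    [AddCommGroup M] [Module R M] [IsTopologicalAddGroup M] (A : M →L[R] M) (x : M) (n : ℕ) :
    ∑ j ∈ range n, ((1 - A) ^ j) (A x) = x - ((1 - A) ^ n) x := by
  have h := geom_sum_mul_neg (1 - A) n
  rw [sub_sub_cancel] at h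
  simpa using DFunLike.congr_fun h x

variable {E : Type*} [NormedAddCommGroup E] [InnerProductSpace ℝ E]

theorem IsPositive.norm_apply_sq_le {P : E →L[ℝ] E} (hP : P.IsPositive) (x : E) :
    ‖P x‖ ^ 2 ≤ ‖P‖ * ⟪P x, x⟫_ℝ := by
  -- Cauchy–Schwarz for the semidefinite form `⟪P ·, ·⟫`, applied to `x` and `P x`
  have hCS := LinearMap.BilinForm.apply_mul_apply_le_of_forall_zero_le
    ((innerₗ E).comp (P : E →ₗ[ℝ] E)) hP.inner_nonneg_left x (P x)
  simp only [LinearMap.comp_apply, coe_coe, innerₗ_apply_apply,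
    hP.inner_left_eq_inner_right (P x) x, real_inner_self_eq_norm_sq] at hCS
  have hPPx : ⟪P (P x), P x⟫_ℝ ≤ ‖P‖ * ‖P x‖ ^ 2 :=
    calc ⟪P (P x), P x⟫_ℝ ≤ ‖P (P x)‖ * ‖P x‖ := real_inner_le_norm _ _
      _ ≤ ‖P‖ * ‖P x‖ * ‖P x‖ := by gcongr; exact P.le_opNorm _
      _ = ‖P‖ * ‖P x‖ ^ 2 := by ring
  rcases (sq_nonneg ‖P x‖).eq_or_lt with h | h
  · rw [← h]
    exact mul_nonneg (norm_nonneg P) (hP.inner_nonneg_left x)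
  · nlinarith [hP.inner_nonneg_left x]

theorem IsPositive.pow [CompleteSpace E] {P : E →L[ℝ] E} (hP : P.IsPositive) (n : ℕ) :
    (P ^ n).IsPositive := by
  induction n using Nat.twoStepInduction with
  | zero => simp
  | one => simpa using hP
  | more n ih _ =>
    have h : P ^ (n + 2) = P† ∘L (P ^ n) ∘L P := by
      rw [hP.isSelfAdjoint.adjoint_eq, pow_succ, pow_succ']
      rfl
    rw [h]
    exact ih.adjoint_conj P

theorem IsPositive.inner_pow_apply_pow_apply_nonneg [CompleteSpace E] {T : E →L[ℝ] E}
    (hT : T.IsPositive) (y : E) (i j : ℕ) : 0 ≤ ⟪(T ^ i) y, (T ^ j) y⟫_ℝ := by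
  rw [← (hT.pow j).inner_left_eq_inner_right, ← mul_apply_eq_comp, ← pow_add]
  exact (hT.pow _).inner_nonneg_left y

section OneSub

variable {A : E →L[ℝ] E} (hA : A.IsPositive) (hA1 : ‖A‖ ≤ 1)
include hA hA1

theorem IsPositive.one_sub : (1 - A).IsPositive := by
  refine (isPositive_iff _).mpr ⟨isPositive_one.isSymmetric.sub hA.isSymmetric, fun x => ?_⟩
  have h : ⟪A x, x⟫_ℝ ≤ ‖x‖ ^ 2 :=
    calc ⟪A x, x⟫_ℝ ≤ ‖A x‖ * ‖x‖ := real_inner_le_norm _ _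
      _ ≤ ‖A‖ * ‖x‖ * ‖x‖ := by gcongr; exact A.le_opNorm x
      _ ≤ ‖x‖ ^ 2 := by nlinarith [norm_nonneg x]
  rw [sub_apply, one_apply_eq_self, inner_sub_left, real_inner_self_eq_norm_sq]
  exact sub_nonneg.mpr h

theorem IsPositive.norm_apply_sq_add_norm_one_sub_apply_sq_le (x : E) :
    ‖A x‖ ^ 2 + ‖(1 - A) x‖ ^ 2 ≤ ‖x‖ ^ 2 := by
  have h := hA.norm_apply_sq_le x
  have hnn := hA.inner_nonneg_left x
  have hsym := hA.inner_left_eq_inner_right x x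
  rw [sub_apply, one_apply_eq_self, norm_sub_sq_real, ← hsym]
  nlinarith

theorem IsPositive.norm_one_sub_pow_le_one (n : ℕ) : ‖(1 - A) ^ n‖ ≤ 1 := by
  have h : ‖1 - A‖ ≤ 1 := opNorm_le_bound _ zero_le_one fun x => by
    have := hA.norm_apply_sq_add_norm_one_sub_apply_sq_le hA1 x
    nlinarith [norm_nonneg ((1 - A) x), norm_nonneg x, sq_nonneg ‖A x‖]
  rcases n with _ | n
  · exact norm_id_le
  · exact (norm_pow_le' _ n.succ_pos).trans (pow_le_one₀ (norm_nonneg _) h)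

theorem IsPositive.tendsto_apply_one_sub_pow_apply (u : E) :
    Tendsto (fun n => A (((1 - A : E →L[ℝ] E) ^ n) u)) atTop (𝓝 0) := by
  have htelescope : ∀ N, ∑ n ∈ range N, ‖A (((1 - A : E →L[ℝ] E) ^ n) u)‖ ^ 2
      ≤ ‖u‖ ^ 2 - ‖((1 - A : E →L[ℝ] E) ^ N) u‖ ^ 2 := by
    intro N
    induction N with
    | zero => simp
    | succ N ih =>
      have := hA.norm_apply_sq_add_norm_one_sub_apply_sq_le hA1 (((1 - A : E →L[ℝ] E) ^ N) u)
      rw [sum_range_succ, pow_succ' (1 - A : E →L[ℝ] E), mul_apply_eq_comp]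
      linarith
  have hsummable : Summable fun n => ‖A (((1 - A : E →L[ℝ] E) ^ n) u)‖ ^ 2 :=
    summable_of_sum_range_le (fun _ => sq_nonneg _) fun N =>
      (htelescope N).trans (sub_le_self _ (sq_nonneg _))
  rw [tendsto_zero_iff_norm_tendsto_zero]
  simpa [Real.sqrt_sq (norm_nonneg _)] using hsummable.tendsto_atTop_zero.sqrt

variable [CompleteSpace E]

theorem IsPositive.tendsto_one_sub_pow_apply {x : E} (hx : x ∈ A.kerᗮ) :
    Tendsto (fun n => ((1 - A : E →L[ℝ] E) ^ n) x) atTop (𝓝 0) := by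
  have hequi : Equicontinuous fun n => ⇑((1 - A : E →L[ℝ] E) ^ n) := by
    have := (NormedSpace.equicontinuous_TFAE fun n => (1 - A : E →L[ℝ] E) ^ n).out 1 5
    exact this.mpr ⟨1, hA.norm_one_sub_pow_le_one hA1⟩
  have hclosed := hequi.isClosed_setOfPred_tendsto (l := atTop) (f := fun _ => 0) continuous_const
  have hrange : (A.range : Set E) ⊆
      {x | Tendsto (fun n => ((1 - A : E →L[ℝ] E) ^ n) x) atTop (𝓝 0)} := by
    rintro _ ⟨u, rfl⟩
    have hcomm : Commute (1 - A) A := (Commute.one_left A).sub_left (Commute.refl A)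
    refine (hA.tendsto_apply_one_sub_pow_apply hA1 u).congr fun n => ?_
    exact (DFunLike.congr_fun (hcomm.pow_left n).eq u).symm
  have hker : A.kerᗮ = A.range.topologicalClosure := by
    simpa [hA.isSelfAdjoint.adjoint_eq] using A.orthogonal_ker
  rw [hker] at hx
  exact closure_minimal hrange hclosed hx

theorem IsPositive.hasSum_one_sub_pow_apply {x : E} (hx : x ∈ A.kerᗮ) :
    HasSum (fun j => ((1 - A : E →L[ℝ] E) ^ j) (A x)) x := by
  refine hasSum_of_tendsto_sum_range_of_inner_nonneg
    (fun i j => (hA.one_sub hA1).inner_pow_apply_pow_apply_nonneg (A x) i j) ?_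
  simp_rw [sum_range_one_sub_pow_apply]
  simpa using tendsto_const_nhds.sub (hA.tendsto_one_sub_pow_apply hA1 hx)

end OneSub

theorem exists_mem_orthogonal_ker_apply_eq [CompleteSpace E] {F : Type*} [NormedAddCommGroup F]
    [InnerProductSpace ℝ F] (L : E →L[ℝ] F) {m : F} (hm : m ∈ L.range) :
    ∃ f ∈ L.kerᗮ, L f = m := by
  obtain ⟨f₀, rfl⟩ := hm
  have : CompleteSpace L.ker := L.isClosed_ker.completeSpace_coe
  refine ⟨f₀ - L.ker.starProjection f₀, L.ker.sub_starProjection_mem_orthogonal f₀, ?_⟩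
  simp [show L (L.ker.starProjection f₀) = 0 from L.ker.starProjection_apply_mem f₀]

end ContinuousLinearMap

theorem stmt_12
    {H₁ H₂ : Type*}
    [NormedAddCommGroup H₁] [InnerProductSpace ℝ H₁] [CompleteSpace H₁]
    [NormedAddCommGroup H₂] [InnerProductSpace ℝ H₂] [CompleteSpace H₂]
    (L : H₁ →L[ℝ] H₂) (m : H₂) (hm : m ∈ LinearMap.range (L : H₁ →ₗ[ℝ] H₂))
    (ω : ℝ) (hω : 0 < ω) (hωL : ω * ‖L‖ ^ 2 ≤ 1) :
    ∃ fdag : H₁, (L fdag = m ∧ fdag ∈ (LinearMap.ker (L : H₁ →ₗ[ℝ] H₂))ᗮ) ∧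
      HasSum
        (fun j : ℕ =>
          ((ContinuousLinearMap.id ℝ H₁ - ω • (ContinuousLinearMap.adjoint L ∘L L)) ^ j)
            (ω • (ContinuousLinearMap.adjoint L) m))
        fdag := by
  set A := ω • (L† ∘L L)
  have hA : A.IsPositive := (isPositive_adjoint_comp_self L).smul_of_nonneg hω.le
  have hA1 : ‖A‖ ≤ 1 := by
    rwa [norm_smul, norm_adjoint_comp_self, Real.norm_of_nonneg hω.le, ← sq]
  have hker : A.ker = L.ker := by
    rw [toLinearMap_smul, LinearMap.ker_smul _ _ hω.ne', ker_adjoint_comp_self]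
  obtain ⟨fdag, hmem, rfl⟩ := exists_mem_orthogonal_ker_apply_eq L hm
  refine ⟨fdag, ⟨rfl, hmem⟩, ?_⟩
  simpa [A] using hA.hasSum_one_sub_pow_apply hA1 (hker ▸ hmem)
end
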